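/- Let q be a positive integer and define the sequence a by a_0 = 2, a_1 = t, and a_{n} = t·a_{n-1} - q·a_{n-2} for n ≥ 2. Define N_n = q^n + 1 - a_n. Then for all positive integers d and n, if d divides n then N_d divides N_n. -/
import Mathlib

private lemma lucas_add (q t : ℤ) (a : ℕ → ℤ)
    (ha0 : a 0 = 2) (ha1 : a 1 = t)
    (harec : ∀ n : ℕ, a (n + 2) = t * a (n + 1) - q * a n) :
    ∀ n j : ℕ, a (j + n + n) = a n * a (j + n) - q ^ n * a j := by
  have main : ∀ n : ℕ, (∀ j, a (j + n + n) = a n * a (j + n) - q ^ n * a j) ∧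
      (∀ j, a (j + (n+1) + (n+1)) = a (n+1) * a (j + (n+1)) - q ^ (n+1) * a j) := by
    intro n
    induction n with
    | zero =>
      constructor
      · intro j; simp [ha0]; ring
      · intro j
        have := harec j
        rw [show j + 1 + 1 = j + 2 from rfl, this, ha1]
        ring
    | succ n ih =>
      obtain ⟨ih0, ih1⟩ := ih
      refine ⟨ih1, fun j => ?_⟩
      have H1 := ih1 (j + 2)
      rw [show j + 2 + (n+1) + (n+1) = j + n + n + 4 from by omega,
          show j + 2 + (n+1) = j + n + 3 from by omega] at H1
      have H2 := ih1 j
      rw [show j + (n+1) + (n+1) = j + n + n + 2 from by omega,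
          show j + (n+1) = j + n + 1 from by omega] at H2
      have H3 := ih0 (j + 2)
      rw [show j + 2 + n + n = j + n + n + 2 from by omega,
          show j + 2 + n = j + n + 2 from by omega] at H3
      have H4 := harec (j + n + 1)
      rw [show j + n + 1 + 2 = j + n + 3 from by omega,
          show j + n + 1 + 1 = j + n + 2 from by omega] at H4
      have H5 := harec n
      rw [show (n+1+1 : ℕ) = n+2 from rfl]
      rw [show j + (n+2) + (n+2) = j + n + n + 4 from by omega,
          show j + (n+2) = j + n + 2 from by omega]
      linear_combination H1 + a (n+1) * H4 - a (j+n+2) * H5 + q * H2 - q * H3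
  intro n j
  exact (main n).1 j

private lemma lucas_mod (r s : ℤ) (b : ℕ → ℤ)
    (hb0 : b 0 = 2) (hb1 : b 1 = s)
    (hrec : ∀ k : ℕ, b (k + 2) = s * b (k + 1) - r * b k) :
    ∀ k : ℕ, (r + 1 - s) ∣ (r ^ k + 1 - b k) := by
  have main : ∀ k : ℕ, (r + 1 - s) ∣ (r ^ k + 1 - b k) ∧ (r + 1 - s) ∣ (r ^ (k+1) + 1 - b (k+1)) := by
    intro k
    induction k with
    | zero =>
      refine ⟨by simp [hb0], ?_⟩
      simp [hb1]
    | succ k ih =>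
      obtain ⟨ih0, ih1⟩ := ih
      refine ⟨ih1, ?_⟩
      have : r ^ (k+2) + 1 - b (k+2)
          = s * (r^(k+1) + 1 - b (k+1)) - r * (r^k + 1 - b k) + (r^(k+1) + 1) * (r + 1 - s) := by
        rw [hrec k]; ring
      rw [this]
      exact dvd_add (dvd_sub (ih1.mul_left s) (ih0.mul_left r)) (Dvd.intro_left _ rfl)
  exact fun k => (main k).1

/-- If `a 0 = 2`, `a 1 = t`, `a (n+2) = t·a (n+1) - q·a n`, and
`N n = q^n + 1 - a n`, then `d ∣ n → N d ∣ N n`. -/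
theorem stmt_2 (q t : ℤ) (hq : 0 < q) (a N : ℕ → ℤ)
    (ha0 : a 0 = 2) (ha1 : a 1 = t)
    (harec : ∀ n : ℕ, a (n + 2) = t * a (n + 1) - q * a n)
    (hN : ∀ n : ℕ, N n = q ^ n + 1 - a n) :
    ∀ d n : ℕ, 0 < d → 0 < n → d ∣ n → N d ∣ N n := by
  intro d n hd hn hdn
  obtain ⟨k, rfl⟩ := hdn
  set b : ℕ → ℤ := fun k => a (d * k) with hb
  have hb0 : b 0 = 2 := by simp [hb, ha0]
  have hb1 : b 1 = a d := by simp [hb]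
  have hbrec : ∀ m : ℕ, b (m + 2) = a d * b (m + 1) - q ^ d * b m := by
    intro m
    have := lucas_add q t a ha0 ha1 harec d (d * m)
    simp only [hb]
    rw [show d * (m + 2) = d * m + d + d from by ring,
        show d * (m + 1) = d * m + d from by ring]
    exact this
  have key := lucas_mod (q ^ d) (a d) b hb0 hb1 hbrec k
  rw [hN d, hN (d * k)]
  have : q ^ (d * k) = (q ^ d) ^ k := by rw [← pow_mul]
  rw [this]
  exact key
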